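/- arXiv:2105.09069 — 2 statements merged into one kernel-verified Lean document; each statement's English description precedes it below -/
import Mathlib

section
/- If λ ∈ Γ_k, then for every index 1 ≤ i ≤ n one has σ_{k-1}(λ|i) > 0, where σ_{k-1}(λ|i) denotes the (k-1)-st elementary symmetric polynomial of λ with the i-th entry deleted (equivalently, ∂σ_k/∂λ_i > 0 on Γ_k). -/
open Finset

/-- The k-th elementary symmetric polynomial of `lam : Fin n → ℝ`. -/
noncomputable def sigma' {n : ℕ} (k : ℕ) (lam : Fin n → ℝ) : ℝ :=
  ∑ s ∈ Finset.univ.powersetCard k, ∏ i ∈ s, lam i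

/-- The Garding cone `Γ_k`. -/
def Gamma {n : ℕ} (k : ℕ) : Set (Fin n → ℝ) :=
  {lam | ∀ j, 1 ≤ j → j ≤ k → 0 < sigma' j lam}

/-- `σ_k(λ|i)`: the k-th elementary symmetric polynomial of λ with the i-th entry deleted. -/
noncomputable def sigmaDel {n : ℕ} (k : ℕ) (lam : Fin n → ℝ) (i : Fin n) : ℝ :=
  ∑ s ∈ (Finset.univ.erase i).powersetCard k, ∏ j ∈ s, lam j

/-!
Let `P(t) = ∏ⱼ (t + λⱼ) = ∑ⱼ σⱼ(λ) tⁿ⁻ʲ` and `Q(t) = ∏_{j ≠ i} (t + λⱼ)`, so `P = (t + λᵢ) Q`.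
With `m = n - k`, the coefficients of `F = P⁽ᵐ⁾` are nonnegative multiples of `σₖ, …, σ₁, σ₀`,
so `F > 0` on `[0, ∞)`, while `G = Q⁽ᵐ⁾` is real-rooted with positive leading coefficient and
`G(0) = m! σₖ₋₁(λ|i)`. It therefore suffices that all roots of `G` are negative.
If `β ≥ 0` were the largest root of `G`, Leibniz' rule would give `F(β) = m H(β)` with
`H = Q⁽ᵐ⁻¹⁾`, so `H(β) > 0`. But a real-rooted `H` with positive leading coefficient that is
positive at a critical point `β` has all its roots below `β` (a root beyond `β` would produce,
by the intermediate value theorem and Rolle, a critical point beyond `β`), and then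
`H'(β) = H(β) ∑ 1 / (β - rⱼ) > 0`, contradicting `H'(β) = G(β) = 0`.
-/

open Polynomial

namespace Polynomial

theorem iterate_derivative_X_add_C_mul {R : Type*} [CommRing R] (a : R) (q : R[X]) (m : ℕ) :
    derivative^[m] ((X + C a) * q) =
      (X + C a) * derivative^[m] q + m • derivative^[m - 1] q := by
  rw [add_mul, iterate_map_add, mul_comm X, iterate_derivative_mul_X, iterate_derivative_C_mul]
  ring

theorem natDegree_iterate_derivative_eq {R : Type*} [Semiring R] [IsAddTorsionFree R]
    (p : R[X]) (j : ℕ) : (derivative^[j] p).natDegree = p.natDegree - j := by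
  induction j with
  | zero => rfl
  | succ j ih => rw [Function.iterate_succ_apply', natDegree_derivative, ih, Nat.sub_sub]

theorem leadingCoeff_iterate_derivative_pos {p : ℝ[X]} (hp : 0 < p.leadingCoeff) {j : ℕ}
    (hj : j ≤ p.natDegree) : 0 < (derivative^[j] p).leadingCoeff := by
  induction j with
  | zero => exact hp
  | succ j ih =>
    rw [Function.iterate_succ_apply', leadingCoeff_derivative, natDegree_iterate_derivative_eq]
    exact mul_pos (ih (by omega)) (by norm_cast; omega)

theorem eval_pos_of_coeff_nonneg {p : ℝ[X]} (hcoeff : ∀ j, 0 ≤ p.coeff j) (h0 : 0 < p.coeff 0)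
    {x : ℝ} (hx : 0 ≤ x) : 0 < p.eval x := by
  rw [eval_eq_sum_range]
  exact Finset.sum_pos' (fun j _ => mul_nonneg (hcoeff j) (pow_nonneg hx j))
    ⟨0, by simp, by simpa using h0⟩

theorem eval_iterate_derivative_pos {p : ℝ[X]} {m : ℕ} (hcoeff : ∀ j, m ≤ j → 0 ≤ p.coeff j)
    (hm : 0 < p.coeff m) {x : ℝ} (hx : 0 ≤ x) : 0 < (derivative^[m] p).eval x := by
  refine eval_pos_of_coeff_nonneg (fun j => ?_) ?_ hx <;> rw [coeff_iterate_derivative]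
  · exact nsmul_nonneg (hcoeff _ (Nat.le_add_left _ _)) _
  · rw [zero_add, Nat.descFactorial_self]
    exact nsmul_pos hm (Nat.factorial_ne_zero m)

theorem exists_eval_derivative_eq_zero_gt_of_eval_lt {p : ℝ[X]} (hlc : 0 < p.leadingCoeff)
    {β r : ℝ} (hβr : β < r) (hlt : p.eval r < p.eval β) :
    ∃ z, β < z ∧ (derivative p).eval z = 0 := by
  have hdeg : 0 < p.degree := by
    by_contra! h
    rw [eq_C_of_degree_le_zero h] at hlt
    simp at hlt
  obtain ⟨T, hT, hrT⟩ := ((tendsto_atTop_of_leadingCoeff_nonneg p hdeg hlc.le).eventually_ge_atTop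
    (p.eval β) |>.and (Filter.eventually_ge_atTop r)).exists
  obtain ⟨s, hs, hps⟩ := intermediate_value_Icc hrT p.continuousOn ⟨hlt.le, hT⟩
  obtain ⟨z, hz, hz0⟩ := exists_deriv_eq_zero (hβr.trans_le hs.1) p.continuousOn hps.symm
  exact ⟨z, hz.1, by rwa [Polynomial.deriv] at hz0⟩

theorem splits_derivative {p : ℝ[X]} (hp : p.Splits) : (derivative p).Splits := by
  rw [splits_iff_card_roots] at hp ⊢
  have := card_roots_le_derivative p
  have := card_roots' (derivative p)
  rw [natDegree_derivative] at *
  omega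

theorem splits_iterate_derivative {p : ℝ[X]} (hp : p.Splits) (j : ℕ) :
    (derivative^[j] p).Splits := by
  induction j with
  | zero => exact hp
  | succ j ih => rw [Function.iterate_succ_apply']; exact splits_derivative ih

namespace Splits

variable {p : ℝ[X]}

theorem eval_pos_of_roots_lt (hp : p.Splits) (hlc : 0 < p.leadingCoeff) {x : ℝ}
    (hx : ∀ r ∈ p.roots, r < x) : 0 < p.eval x := by
  rw [hp.eval_eq_prod_roots]
  refine mul_pos hlc (Multiset.prod_pos fun _ h => ?_)
  obtain ⟨r, hr, rfl⟩ := Multiset.mem_map.1 h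
  exact sub_pos.2 (hx r hr)

theorem eval_derivative_pos_of_roots_lt (hp : p.Splits) (hlc : 0 < p.leadingCoeff)
    (hdeg : p.natDegree ≠ 0) {x : ℝ} (hx : ∀ r ∈ p.roots, r < x) :
    0 < (derivative p).eval x := by
  have hpx := hp.eval_pos_of_roots_lt hlc hx
  rw [hp.eval_derivative_eq_eval_mul_sum hpx.ne']
  refine mul_pos hpx ?_
  simpa using Multiset.sum_lt_sum_of_nonempty (f := fun _ => (0 : ℝ))
    (hp.roots_ne_zero hdeg) fun r hr => one_div_pos.2 (sub_pos.2 (hx r hr))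

theorem exists_eval_derivative_eq_zero_gt_of_eval_pos (hp : p.Splits)
    (hlc : 0 < p.leadingCoeff) {β : ℝ} (hβ : (derivative p).eval β = 0) (hpβ : 0 < p.eval β) :
    ∃ z, β < z ∧ (derivative p).eval z = 0 := by
  by_contra! hz
  have hdeg : p.natDegree ≠ 0 := by
    rw [← derivative_ne_zero]
    rintro h
    exact hz (β + 1) (by linarith) (by simp [h])
  refine (hp.eval_derivative_pos_of_roots_lt hlc hdeg fun r hr => ?_).ne' hβ
  by_contra! hβr
  have hr0 : p.eval r = 0 := (mem_roots'.1 hr).2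
  obtain ⟨z, hβz, hz0⟩ := exists_eval_derivative_eq_zero_gt_of_eval_lt hlc
    (hβr.lt_of_ne (by rintro rfl; linarith)) (hr0 ▸ hpβ)
  exact hz z hβz hz0

theorem roots_derivative_lt (hp : p.Splits) (hlc : 0 < p.leadingCoeff) {c : ℝ}
    (hpos : ∀ x, c ≤ x → (derivative p).eval x = 0 → 0 < p.eval x) :
    ∀ r ∈ (derivative p).roots, r < c := by
  by_contra! ⟨r, hr, hcr⟩
  obtain ⟨β, hβ, hmax⟩ := Finset.exists_max_image (derivative p).roots.toFinset id
    ⟨r, Multiset.mem_toFinset.2 hr⟩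
  rw [Multiset.mem_toFinset, mem_roots'] at hβ
  obtain ⟨z, hβz, hz⟩ := hp.exists_eval_derivative_eq_zero_gt_of_eval_pos hlc hβ.2
    (hpos β (hcr.trans (hmax r (Multiset.mem_toFinset.2 hr))) hβ.2)
  exact hβz.not_ge (hmax z (Multiset.mem_toFinset.2 ((mem_roots hβ.1).2 hz)))

theorem roots_iterate_derivative_lt (hp : p.Splits) (hlc : 0 < p.leadingCoeff) {m : ℕ}
    (hm : m ≤ p.natDegree) {a c : ℝ}
    (hpos : ∀ x, c ≤ x → 0 < (derivative^[m] ((X + C a) * p)).eval x) :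
    ∀ r ∈ (derivative^[m] p).roots, r < c := by
  have hcrit : ∀ x, c ≤ x → (derivative^[m] p).eval x = 0 →
      0 < m * (derivative^[m - 1] p).eval x := by
    intro x hx hx0
    simpa [iterate_derivative_X_add_C_mul, hx0] using hpos x hx
  cases m with
  | zero =>
    intro r hr
    by_contra! hcr
    simpa using hcrit r hcr (mem_roots'.1 hr).2
  | succ m =>
    simp only [Function.iterate_succ_apply', Nat.add_sub_cancel] at hcrit ⊢
    exact (splits_iterate_derivative hp m).roots_derivative_lt
      (leadingCoeff_iterate_derivative_pos hlc (by omega))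
      fun x hx hx0 => pos_of_mul_pos_right (hcrit x hx hx0) (by positivity)

end Splits

end Polynomial

section Garding

variable {n : ℕ} (lam : Fin n → ℝ)

theorem coeff_prod_X_add_C_eq_sigma' {j : ℕ} (hj : j ≤ n) :
    (∏ l, (X + C (lam l))).coeff (n - j) = sigma' j lam := by
  rw [Finset.prod_X_add_C_coeff _ _ (by simp), sigma']
  simp [Nat.sub_sub_self hj]

theorem coeff_prod_erase_X_add_C_eq_sigmaDel (i : Fin n) {j : ℕ} (hj : j < n) :
    (∏ l ∈ univ.erase i, (X + C (lam l))).coeff (n - 1 - j) = sigmaDel j lam i := by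
  rw [Finset.prod_X_add_C_coeff _ _ (by simp), sigmaDel]
  simp [Nat.sub_sub_self (show j ≤ n - 1 by omega)]

theorem coeff_prod_X_add_C_pos_of_mem_Gamma {k : ℕ} (hlam : lam ∈ Gamma k) {j : ℕ}
    (hkj : n - k ≤ j) (hjn : j ≤ n) : 0 < (∏ l, (X + C (lam l))).coeff j := by
  rw [← Nat.sub_sub_self hjn, coeff_prod_X_add_C_eq_sigma' lam (Nat.sub_le n j)]
  rcases Nat.eq_zero_or_pos (n - j) with h | h
  · simp [h, sigma']
  · exact hlam _ h (by omega)

theorem eval_iterate_derivative_prod_X_add_C_pos {k : ℕ} (hlam : lam ∈ Gamma k) {x : ℝ}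
    (hx : 0 ≤ x) : 0 < (derivative^[n - k] (∏ l, (X + C (lam l)))).eval x := by
  refine eval_iterate_derivative_pos (fun j hj => ?_)
    (coeff_prod_X_add_C_pos_of_mem_Gamma lam hlam le_rfl (Nat.sub_le n k)) hx
  rcases le_or_gt j n with hjn | hnj
  · exact (coeff_prod_X_add_C_pos_of_mem_Gamma lam hlam hj hjn).le
  · rw [coeff_eq_zero_of_natDegree_lt]
    simpa [natDegree_prod_of_monic _ _ fun l _ => monic_X_add_C (lam l)] using hnj

end Garding

/-- If λ ∈ Γ_k, then σ_{k-1}(λ|i) > 0 for every index i. -/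
theorem sigmaDel_pos {n k : ℕ} (hk : 1 ≤ k) (hkn : k ≤ n) {lam : Fin n → ℝ}
    (hlam : lam ∈ (Gamma k : Set (Fin n → ℝ))) (i : Fin n) :
    0 < sigmaDel (k - 1) lam i := by
  set Q := ∏ l ∈ univ.erase i, (X + C (lam l))
  have hQ : Q.Splits := Splits.prod fun l _ => Splits.X_add_C (lam l)
  have hQmonic : Q.Monic := monic_prod_of_monic _ _ fun l _ => monic_X_add_C (lam l)
  have hQdeg : Q.natDegree = n - 1 := by
    simp [Q, natDegree_prod_of_monic _ _ fun l _ => monic_X_add_C (lam l)]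
  have hPQ : (X + C (lam i)) * Q = ∏ l, (X + C (lam l)) :=
    mul_prod_erase univ (fun l => X + C (lam l)) (mem_univ i)
  have hroots : ∀ r ∈ (derivative^[n - k] Q).roots, r < 0 :=
    hQ.roots_iterate_derivative_lt (by simp [hQmonic]) (by omega) fun x hx => by
      rw [hPQ]
      exact eval_iterate_derivative_prod_X_add_C_pos lam hlam hx
  have hG0 := (splits_iterate_derivative hQ (n - k)).eval_pos_of_roots_lt
    (leadingCoeff_iterate_derivative_pos (by simp [hQmonic]) (by omega)) hroots
  rw [← coeff_zero_eq_eval_zero, coeff_iterate_derivative, zero_add,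
    show n - k = n - 1 - (k - 1) by omega,
    coeff_prod_erase_X_add_C_eq_sigmaDel lam i (by omega), nsmul_eq_mul] at hG0
  exact pos_of_mul_pos_right hG0 (Nat.cast_nonneg _)
end

section
/- Generalized Newton–MacLaurin inequality: for λ ∈ Γ_m and integers m > l ≥ 0, r > s ≥ 0 with m ≥ r and l ≥ s, one has [ (σ_m(λ)/C(n,m)) / (σ_l(λ)/C(n,l)) ]^{1/(m-l)} ≤ [ (σ_r(λ)/C(n,r)) / (σ_s(λ)/C(n,s)) ]^{1/(r-s)}. -/
open Finset

/-!
Newton's inequalities `p_k p_{k+2} ≤ p_{k+1}²` for `p_j = σ_j(λ) / C(n, j)` hold for every real `λ`.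
The `σ_j` are the coefficients of `∏ (X + λᵢ)`, a polynomial that splits over `ℝ`; by Rolle's
theorem so do all its derivatives. Differentiating shifts coefficient indices down by one, which
reduces Newton's inequality at any index to the lowest one, `2N c₀c₂ ≤ (N - 1) c₁²`, and that one is
proved by induction on the roots.

On `Γ_m` the numbers `p_0, …, p_m` are positive, so `j ↦ log p_j` is concave on `{0, …, m}`. The
claim compares the chord slopes of this concave sequence over `[l, m]` and `[s, r]`, and chord slopes
of a concave sequence decrease when either endpoint moves right.
-/

namespace Polynomial

theorem newton_coeff_zero_multiset_prod_X_sub_C (s : Multiset ℝ) :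
    2 * (Multiset.card s : ℝ) *
        ((s.map (X - C ·)).prod.coeff 0 * (s.map (X - C ·)).prod.coeff 2) ≤
      ((Multiset.card s : ℝ) - 1) * (s.map (X - C ·)).prod.coeff 1 ^ 2 := by
  induction s using Multiset.induction_on with
  | empty => simp [coeff_one]
  | cons x s ih =>
    set N : ℝ := (Multiset.card s : ℝ)
    set P := (s.map (X - C ·)).prod
    rw [Multiset.map_cons, Multiset.prod_cons, Multiset.card_cons, Nat.cast_succ, mul_coeff_zero,
      coeff_X_sub_C_mul, coeff_X_sub_C_mul]
    simp only [coeff_sub, coeff_X_zero, coeff_C_zero, zero_sub]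
    rcases (Multiset.card s).eq_zero_or_pos with hs | hs
    · obtain rfl := Multiset.card_eq_zero.mp hs
      simp [coeff_one]
    · have hN : (1 : ℝ) ≤ N := Nat.one_le_cast.mpr hs
      -- after scaling by `N`, the defect of the new inequality is at least `(N c₀ + x c₁)²`
      nlinarith [mul_le_mul_of_nonneg_left ih (by positivity : 0 ≤ (N + 1) * x ^ 2),
        sq_nonneg (N * P.coeff 0 + x * P.coeff 1)]

theorem Splits.newton_coeff_zero {p : ℝ[X]} (hp : p.Splits) :
    2 * (p.natDegree : ℝ) * (p.coeff 0 * p.coeff 2) ≤ ((p.natDegree : ℝ) - 1) * p.coeff 1 ^ 2 := by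
  have hprod := hp.eq_prod_roots
  rw [hp.natDegree_eq_card_roots]
  set s := p.roots
  rw [hprod]
  simp only [coeff_C_mul]
  nlinarith [mul_le_mul_of_nonneg_left (newton_coeff_zero_multiset_prod_X_sub_C s)
    (sq_nonneg p.leadingCoeff)]

theorem Splits.derivative {p : ℝ[X]} (hp : p.Splits) : p.derivative.Splits := by
  rw [splits_iff_card_roots] at hp ⊢
  have hrolle := card_roots_le_derivative p
  have hdeg := card_roots' p.derivative
  rw [natDegree_derivative] at hdeg ⊢
  omega

theorem Splits.newton_coeff {p : ℝ[X]} (hp : p.Splits) {i : ℕ} (hi : i + 2 ≤ p.natDegree) :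
    ((p.natDegree : ℝ) - i) * (i + 2) * (p.coeff i * p.coeff (i + 2)) ≤
      (i + 1) * ((p.natDegree : ℝ) - i - 1) * p.coeff (i + 1) ^ 2 := by
  induction i generalizing p with
  | zero => simpa [mul_comm] using hp.newton_coeff_zero
  | succ i ih =>
    have h := ih hp.derivative (by rw [natDegree_derivative]; omega)
    rw [natDegree_derivative, Nat.cast_sub (by omega)] at h
    simp only [coeff_derivative] at h
    push_cast at h ⊢
    refine le_of_mul_le_mul_right ?_ (by positivity : (0 : ℝ) < (i + 1) * (i + 2))
    linear_combination h

end Polynomial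

open Polynomial in
theorem sigma'_newton {n k : ℕ} (lam : Fin n → ℝ) (hk : k + 2 ≤ n) :
    ((k : ℝ) + 2) * ((n : ℝ) - k) * (sigma' k lam * sigma' (k + 2) lam) ≤
      ((k : ℝ) + 1) * ((n : ℝ) - k - 1) * sigma' (k + 1) lam ^ 2 := by
  set P : ℝ[X] := ∏ i, (X + C (lam i))
  have hP : P.Splits := Splits.prod fun i _ => Splits.X_add_C (lam i)
  have hdeg : P.natDegree = n := by
    simp [P, natDegree_prod_of_monic, monic_X_add_C]
  have hcoeff : ∀ j ≤ n, P.coeff j = sigma' (n - j) lam := fun j hj => by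
    simpa [P, sigma'] using Finset.prod_X_add_C_coeff Finset.univ lam (by simpa using hj)
  have h := hP.newton_coeff (i := n - (k + 2)) (by omega)
  rw [hdeg, hcoeff _ (by omega), hcoeff _ (by omega), hcoeff _ (by omega),
    Nat.cast_sub hk] at h
  rw [show n - (n - (k + 2)) = k + 2 by omega, show n - (n - (k + 2) + 1) = k + 1 by omega,
    show n - (n - (k + 2) + 2) = k by omega] at h
  push_cast at h
  linear_combination h

theorem sigma'_div_choose_mul_le_sq {n k : ℕ} (lam : Fin n → ℝ) (hk : k + 2 ≤ n) :
    sigma' k lam / n.choose k * (sigma' (k + 2) lam / n.choose (k + 2)) ≤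
      (sigma' (k + 1) lam / n.choose (k + 1)) ^ 2 := by
  have h₁ : (n.choose (k + 1) : ℝ) * (k + 1) = n.choose k * ((n : ℝ) - k) := by
    rw [← Nat.cast_sub (by omega)]
    exact_mod_cast Nat.choose_succ_right_eq n k
  have h₂ : (n.choose (k + 2) : ℝ) * (k + 2) = n.choose (k + 1) * ((n : ℝ) - k - 1) := by
    rw [sub_sub, ← Nat.cast_succ, ← Nat.cast_sub (by omega)]
    exact_mod_cast Nat.choose_succ_right_eq n (k + 1)
  have hpos : ∀ j ≤ n, (0 : ℝ) < n.choose j := fun j hj => by exact_mod_cast Nat.choose_pos hj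
  rw [div_mul_div_comm, div_pow, div_le_div_iff₀ (mul_pos (hpos k (by omega)) (hpos _ hk))
    (pow_pos (hpos _ (by omega)) 2)]
  have hnk : (0 : ℝ) < ((n : ℝ) - k) * (k + 2) :=
    mul_pos (sub_pos.mpr (by exact_mod_cast (by omega : k < n))) (by positivity)
  refine le_of_mul_le_mul_right ?_ hnk
  calc sigma' k lam * sigma' (k + 2) lam * (n.choose (k + 1) : ℝ) ^ 2 * (((n : ℝ) - k) * (k + 2))
      = (n.choose (k + 1) : ℝ) ^ 2 *
          (((k : ℝ) + 2) * ((n : ℝ) - k) * (sigma' k lam * sigma' (k + 2) lam)) := by ring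
    _ ≤ (n.choose (k + 1) : ℝ) ^ 2 *
          (((k : ℝ) + 1) * ((n : ℝ) - k - 1) * sigma' (k + 1) lam ^ 2) :=
      mul_le_mul_of_nonneg_left (sigma'_newton lam hk) (by positivity)
    _ = sigma' (k + 1) lam ^ 2 * (n.choose k * n.choose (k + 2)) * (((n : ℝ) - k) * (k + 2)) := by
      linear_combination sigma' (k + 1) lam ^ 2 *
        ((n.choose (k + 1) : ℝ) * ((n : ℝ) - k - 1) * h₁ - n.choose k * ((n : ℝ) - k) * h₂)

section ConcaveSequence

variable {q : ℕ → ℝ} {m : ℕ}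

theorem slope_anti_adjacent_of_add_le_two_mul
    (hq : ∀ j, j + 2 ≤ m → q j + q (j + 2) ≤ 2 * q (j + 1))
    {a b c : ℕ} (hab : a ≤ b) (hbc : b ≤ c) (hcm : c ≤ m) :
    (q c - q b) * ((b : ℝ) - a) ≤ (q b - q a) * ((c : ℝ) - b) := by
  set d : ℕ → ℝ := fun j => q (j + 1) - q j
  have hd : AntitoneOn d (Set.Iio m) := by
    refine antitoneOn_of_succ_le Set.ordConnected_Iio fun j _ _ hj => ?_
    simp only [Order.succ_eq_add_one, Set.mem_Iio, d] at hj ⊢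
    linarith [hq j (by omega)]
  have hcard : ∀ {x y : ℕ}, x ≤ y → ((y : ℝ) - x) = #(Ico x y) := fun hxy => by
    rw [Nat.card_Ico, Nat.cast_sub hxy]
  calc (q c - q b) * ((b : ℝ) - a) = ∑ _i ∈ Ico a b, ∑ j ∈ Ico b c, d j := by
        rw [sum_const, nsmul_eq_mul, ← hcard hab, sum_Ico_sub q hbc, mul_comm]
    _ ≤ ∑ i ∈ Ico a b, ∑ _j ∈ Ico b c, d i := by
        refine sum_le_sum fun i hi => sum_le_sum fun j hj => ?_
        rw [mem_Ico] at hi hj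
        exact hd (by simp; omega) (by simp; omega) (by omega)
    _ = (q b - q a) * ((c : ℝ) - b) := by
        simp only [d, sum_const, nsmul_eq_mul]
        rw [← mul_sum, sum_Ico_sub q hab, ← hcard hbc, mul_comm]

theorem slope_le_slope_of_add_le_two_mul
    (hq : ∀ j, j + 2 ≤ m → q j + q (j + 2) ≤ 2 * q (j + 1))
    {l r s : ℕ} (hlm : l < m) (hsr : s < r) (hrm : r ≤ m) (hsl : s ≤ l) :
    (q m - q l) * ((r : ℝ) - s) ≤ (q r - q s) * ((m : ℝ) - l) := by
  have hsm : (0 : ℝ) < (m : ℝ) - s := sub_pos.mpr (by exact_mod_cast hsl.trans_lt hlm)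
  have hrs : (0 : ℝ) ≤ (r : ℝ) - s := sub_nonneg.mpr (by exact_mod_cast hsr.le)
  have hml : (0 : ℝ) ≤ (m : ℝ) - l := sub_nonneg.mpr (by exact_mod_cast hlm.le)
  have hl : (q m - q l) * ((m : ℝ) - s) ≤ (q m - q s) * ((m : ℝ) - l) := by
    linear_combination slope_anti_adjacent_of_add_le_two_mul hq hsl hlm.le le_rfl
  have hr : (q m - q s) * ((r : ℝ) - s) ≤ (q r - q s) * ((m : ℝ) - s) := by
    linear_combination slope_anti_adjacent_of_add_le_two_mul hq hsr.le hrm le_rfl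
  refine le_of_mul_le_mul_right ?_ hsm
  calc (q m - q l) * ((r : ℝ) - s) * ((m : ℝ) - s)
      = (q m - q l) * ((m : ℝ) - s) * ((r : ℝ) - s) := by ring
    _ ≤ (q m - q s) * ((m : ℝ) - l) * ((r : ℝ) - s) := mul_le_mul_of_nonneg_right hl hrs
    _ = (q m - q s) * ((r : ℝ) - s) * ((m : ℝ) - l) := by ring
    _ ≤ (q r - q s) * ((m : ℝ) - s) * ((m : ℝ) - l) := mul_le_mul_of_nonneg_right hr hml
    _ = (q r - q s) * ((m : ℝ) - l) * ((m : ℝ) - s) := by ring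

end ConcaveSequence

theorem rpow_div_le_rpow_div_of_mul_le_sq {p : ℕ → ℝ} {m : ℕ} (hp : ∀ j ≤ m, 0 < p j)
    (hpq : ∀ j, j + 2 ≤ m → p j * p (j + 2) ≤ p (j + 1) ^ 2)
    {l r s : ℕ} (hlm : l < m) (hsr : s < r) (hrm : r ≤ m) (hsl : s ≤ l) :
    (p m / p l) ^ (1 / ((m : ℝ) - l)) ≤ (p r / p s) ^ (1 / ((r : ℝ) - s)) := by
  have hlog : ∀ j, j + 2 ≤ m →
      Real.log (p j) + Real.log (p (j + 2)) ≤ 2 * Real.log (p (j + 1)) := fun j hj =>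
    calc Real.log (p j) + Real.log (p (j + 2)) = Real.log (p j * p (j + 2)) :=
          (Real.log_mul (hp j (by omega)).ne' (hp _ hj).ne').symm
      _ ≤ Real.log (p (j + 1) ^ 2) :=
          Real.log_le_log (mul_pos (hp j (by omega)) (hp _ hj)) (hpq j hj)
      _ = 2 * Real.log (p (j + 1)) := by simp [Real.log_pow]
  have hpos : ∀ {a b}, a ≤ m → b ≤ m → 0 < p a / p b := fun ha hb => div_pos (hp _ ha) (hp _ hb)
  rw [Real.rpow_def_of_pos (hpos le_rfl hlm.le), Real.rpow_def_of_pos (hpos hrm (by omega)),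
    Real.exp_le_exp, Real.log_div (hp _ le_rfl).ne' (hp _ hlm.le).ne',
    Real.log_div (hp _ hrm).ne' (hp s (by omega)).ne', mul_one_div, mul_one_div,
    div_le_div_iff₀ (sub_pos.mpr (by exact_mod_cast hlm)) (sub_pos.mpr (by exact_mod_cast hsr))]
  exact slope_le_slope_of_add_le_two_mul hlog hlm hsr hrm hsl

/-- Generalized Newton–MacLaurin inequality. -/
theorem newton_maclaurin {n m l r s : ℕ} {lam : Fin n → ℝ}
    (hlam : lam ∈ (Gamma m : Set (Fin n → ℝ)))
    (hml : l < m) (hrs : s < r) (hmr : r ≤ m) (hls : s ≤ l) (hmn : m ≤ n) :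
    ((sigma' m lam / (n.choose m : ℝ)) / (sigma' l lam / (n.choose l : ℝ))) ^
        ((1 : ℝ) / ((m : ℝ) - (l : ℝ))) ≤
      ((sigma' r lam / (n.choose r : ℝ)) / (sigma' s lam / (n.choose s : ℝ))) ^
        ((1 : ℝ) / ((r : ℝ) - (s : ℝ))) := by
  have hpos : ∀ j ≤ m, 0 < sigma' j lam / (n.choose j : ℝ) := fun j hj => by
    refine div_pos ?_ (by exact_mod_cast Nat.choose_pos (hj.trans hmn))
    rcases j.eq_zero_or_pos with rfl | hj₀
    · simp [sigma']
    · exact hlam j hj₀ hj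
  exact rpow_div_le_rpow_div_of_mul_le_sq (p := fun j => sigma' j lam / (n.choose j : ℝ)) hpos
    (fun j hj => sigma'_div_choose_mul_le_sq lam (hj.trans hmn)) hml hrs hmr hls
end
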